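/- Let n ≥ 1 and let μ_1, …, μ_n be real numbers with −1 < μ_k < 1 for every k. Then the function F is strictly monotone increasing on the open interval (−1/2, +∞), where F(a) = ∫_{−1/(1+2a)}^{1} x·∏_{k=1}^{n}(1 + μ_{k,a}·x) dx with μ_{k,a} = μ_k + a(1+μ_k). -/
import Mathlib

open Real MeasureTheory Filter Set

private lemma factor_pos {c m x : ℝ} (hc : -1/2 < c) (hm1 : -1 < m) (hm2 : m < 1)
    (hx1 : -1/(1+2*c) ≤ x) (hx2 : x ≤ 1) :
    0 < 1 + (m + c * (1 + m)) * x := by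
  have h2c : 0 < 1 + 2*c := by linarith
  have hx1' : -1 ≤ (1+2*c) * x := by
    rw [div_le_iff₀ h2c] at hx1
    linarith
  rcases le_or_gt 0 (m + c * (1 + m)) with h | h
  · have hkey : 0 < (1+2*c) * (1 + (m + c * (1 + m)) * x) := by
      nlinarith [mul_nonneg h (by linarith : (0:ℝ) ≤ (1+2*c)*x + 1)]
    nlinarith
  · nlinarith [mul_le_mul_of_nonpos_left hx2 h.le]

theorem F_strictMonoOn (n : ℕ) (hn : 1 ≤ n) (μ : Fin n → ℝ)
    (hμ : ∀ k, -1 < μ k ∧ μ k < 1) :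
    StrictMonoOn (fun a : ℝ =>
        ∫ x in (-1/(1+2*a))..1, x * ∏ k, (1 + (μ k + a * (1 + μ k)) * x))
      (Set.Ioi (-1/2 : ℝ)) := by
  intro a ha b hb hab
  simp only [mem_Ioi] at ha hb
  have h2a : 0 < 1 + 2*a := by linarith
  have h2b : 0 < 1 + 2*b := by linarith
  set ga : ℝ := -1/(1+2*a) with hga_def
  set gb : ℝ := -1/(1+2*b) with hgb_def
  have hgb_neg : gb < 0 := div_neg_of_neg_of_pos (by norm_num) h2b
  have hgab : ga < gb := by
    rw [hga_def, hgb_def, div_lt_div_iff₀ h2a h2b]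
    nlinarith
  have hga1 : ga ≤ 1 := by linarith
  have hgb1 : gb ≤ 1 := by linarith
  set fa : ℝ → ℝ := fun x => x * ∏ k, (1 + (μ k + a * (1 + μ k)) * x) with hfa_def
  set fb : ℝ → ℝ := fun x => x * ∏ k, (1 + (μ k + b * (1 + μ k)) * x) with hfb_def
  have hcont : ∀ c : ℝ, Continuous (fun x : ℝ => x * ∏ k, (1 + (μ k + c * (1 + μ k)) * x)) := by
    intro c
    exact continuous_id.mul (continuous_finset_prod _ fun k _ =>
      continuous_const.add (continuous_const.mul continuous_id))
  have hint : ∀ (c u v : ℝ),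
      IntervalIntegrable (fun x : ℝ => x * ∏ k, (1 + (μ k + c * (1 + μ k)) * x)) volume u v :=
    fun c u v => (hcont c).intervalIntegrable u v
  -- product positivity on [g c, 1]
  have hprod_pos : ∀ c : ℝ, -1/2 < c → ∀ x : ℝ, -1/(1+2*c) ≤ x → x ≤ 1 →
      0 < ∏ k, (1 + (μ k + c * (1 + μ k)) * x) := by
    intro c hc x hx1 hx2
    exact Finset.prod_pos fun k _ => factor_pos hc (hμ k).1 (hμ k).2 hx1 hx2
  -- fa < 0 on Ioo ga gb
  have hneg : ∀ x ∈ Ioo ga gb, 0 < -(fa x) := by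
    intro x hx
    have hx1 : ga ≤ x := hx.1.le
    have hx2 : x ≤ 1 := by linarith [hx.2]
    have hp := hprod_pos a ha x hx1 hx2
    have hxneg : x < 0 := by linarith [hx.2]
    simp only [hfa_def]
    nlinarith
  have hI1 : 0 < -∫ x in ga..gb, fa x := by
    have := intervalIntegral.intervalIntegral_pos_of_pos_on
      (f := fun x => -(fa x)) ((hint a ga gb).neg) hneg hgab
    rwa [intervalIntegral.integral_neg] at this
  -- fa ≤ fb on Icc gb 1
  have hmono : ∀ x ∈ Icc gb 1, fa x ≤ fb x := by
    intro x hx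
    have hxga : ga ≤ x := le_trans hgab.le hx.1
    have hfa_pos : ∀ k : Fin n, 0 < 1 + (μ k + a * (1 + μ k)) * x :=
      fun k => factor_pos ha (hμ k).1 (hμ k).2 hxga hx.2
    have hfb_pos : ∀ k : Fin n, 0 < 1 + (μ k + b * (1 + μ k)) * x :=
      fun k => factor_pos hb (hμ k).1 (hμ k).2 hx.1 hx.2
    simp only [hfa_def, hfb_def]
    rcases le_or_gt 0 x with hx0 | hx0
    · refine mul_le_mul_of_nonneg_left (Finset.prod_le_prod
        (fun k _ => (hfa_pos k).le) (fun k _ => ?_)) hx0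
      have h1 : 0 ≤ (b - a) * (1 + μ k) * x :=
        mul_nonneg (mul_nonneg (by linarith) (by linarith [(hμ k).1])) hx0
      nlinarith
    · refine mul_le_mul_of_nonpos_left (Finset.prod_le_prod
        (fun k _ => (hfb_pos k).le) (fun k _ => ?_)) hx0.le
      have h1 : (b - a) * (1 + μ k) * x ≤ 0 :=
        mul_nonpos_of_nonneg_of_nonpos (mul_nonneg (by linarith) (by linarith [(hμ k).1])) hx0.le
      nlinarith
  have hI2 : (∫ x in gb..1, fa x) ≤ ∫ x in gb..1, fb x :=
    intervalIntegral.integral_mono_on hgb1 (hint a gb 1) (hint b gb 1) hmono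
  have hsplit : (∫ x in ga..1, fa x) = (∫ x in ga..gb, fa x) + ∫ x in gb..1, fa x :=
    (intervalIntegral.integral_add_adjacent_intervals (hint a ga gb) (hint a gb 1)).symm
  show (∫ x in ga..1, fa x) < ∫ x in gb..1, fb x
  linarith
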